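/- Let φ be a strictly convex norm on ℝⁿ, K ⊆ ℝⁿ closed, 0 < s < t < ∞, 1 < λ < ∞, and K_{λ,s,t} = {x : ρ_K^φ(x) ≥ λ, s ≤ δ_K^φ(x) ≤ t}. Then the nearest point projection ξ_K^φ restricted to K_{λ,s,t} is (single-valued and) uniformly continuous. -/

import Mathlib

open Set Filter Metric MeasureTheory Topology ENNReal

noncomputable section

abbrev Euc (n : ℕ) := EuclideanSpace ℝ (Fin n)

def IsNorm {n : ℕ} (φ : Euc n → ℝ) : Prop :=
  (∀ x, φ x = 0 ↔ x = 0) ∧ (∀ (c : ℝ) (x : Euc n), φ (c • x) = |c| * φ x) ∧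
    (∀ x y, φ (x + y) ≤ φ x + φ y)

def StrictlyConvexNorm {n : ℕ} (φ : Euc n → ℝ) : Prop :=
  IsNorm φ ∧ ∀ a b, φ (a + b) = φ a + φ b → φ b • a = φ a • b

def UniformlyConvexNorm {n : ℕ} (φ : Euc n → ℝ) : Prop :=
  IsNorm φ ∧ ∃ γ : ℝ, 0 < γ ∧ ConvexOn ℝ Set.univ (fun x => φ x - γ * ‖x‖)

def distφ {n : ℕ} (φ : Euc n → ℝ) (K : Set (Euc n)) (x : Euc n) : ℝ :=
  sInf {r | ∃ y ∈ K, r = φ (x - y)}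

def nearφ {n : ℕ} (φ : Euc n → ℝ) (K : Set (Euc n)) (x : Euc n) : Set (Euc n) :=
  {a ∈ K | φ (x - a) = distφ φ K x}

def rhoφ {n : ℕ} (φ : Euc n → ℝ) (K : Set (Euc n)) (x : Euc n) : ℝ≥0∞ :=
  sSup {r : ℝ≥0∞ | ∃ s : ℝ, ∃ a ∈ nearφ φ K x,
    r = ENNReal.ofReal s ∧ distφ φ K (a + s • (x - a)) = s * distφ φ K x}

def normalBundle {n : ℕ} (φ : Euc n → ℝ) (K : Set (Euc n)) : Set (Euc n × Euc n) :=
  {p | p.1 ∈ K ∧ φ p.2 = 1 ∧ ∃ s : ℝ, 0 < s ∧ distφ φ K (p.1 + s • p.2) = s}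

def reachφ {n : ℕ} (φ : Euc n → ℝ) (K : Set (Euc n)) (p : Euc n × Euc n) : ℝ≥0∞ :=
  sSup {r : ℝ≥0∞ | ∃ s : ℝ, 0 < s ∧ r = ENNReal.ofReal s ∧ distφ φ K (p.1 + s • p.2) = s}

def cutLocus {n : ℕ} (φ : Euc n → ℝ) (K : Set (Euc n)) : Set (Euc n) :=
  {x | ∃ p ∈ normalBundle φ K, reachφ φ K p ≠ ⊤ ∧
    x = p.1 + (reachφ φ K p).toReal • p.2}

def PtTwiceDiffAt {n : ℕ} (f : Euc n → ℝ) (x : Euc n) : Prop :=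
  ∃ (L : Euc n →L[ℝ] ℝ) (Q : Euc n →L[ℝ] Euc n →L[ℝ] ℝ),
    Tendsto (fun y => |f y - f x - L (y - x) - Q (y - x) (y - x)| / ‖y - x‖ ^ 2)
      (𝓝[≠] x) (𝓝 0)

/-!
Let `a` be a nearest point of `x` such that `δ_K` still grows linearly up to
`x' = a + μ • (x - a)` with `μ > 1`, and let `b` be a nearest point of a point `y` close to `x`.
Then `δ_K x' = μ δ_K x ≤ φ (x' - b)`, whereas `φ (x' - x) + φ (x - b) ≤ μ δ_K x + 2 φ (x - y)`:
the vectors `x' - x`, a positive multiple of `x - a`, and `x - b`, both of size bounded below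
in terms of `s`, almost attain the triangle inequality. Strict convexity, made uniform by
compactness of the unit sphere, forces them to point in almost the same direction; as their
lengths `δ_K x ≤ t` and `φ (x - b)` differ by at most `2 φ (x - y)`, `a` is close to `b`.
-/

def unitVec {n : ℕ} (φ : Euc n → ℝ) (z : Euc n) : Euc n := (φ z)⁻¹ • z

namespace IsNorm

variable {n : ℕ} {φ : Euc n → ℝ} {K : Set (Euc n)}

lemma map_zero (h : IsNorm φ) : φ 0 = 0 := (h.1 0).2 rfl

lemma map_smul_of_nonneg (h : IsNorm φ) {c : ℝ} (hc : 0 ≤ c) (x : Euc n) :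
    φ (c • x) = c * φ x := by
  rw [h.2.1, abs_of_nonneg hc]

lemma map_neg (h : IsNorm φ) (x : Euc n) : φ (-x) = φ x := by
  simpa using h.2.1 (-1) x

lemma map_sub_rev (h : IsNorm φ) (x y : Euc n) : φ (x - y) = φ (y - x) := by
  rw [← h.map_neg, neg_sub]

lemma map_sub_le (h : IsNorm φ) (x y z : Euc n) : φ (x - z) ≤ φ (x - y) + φ (y - z) := by
  simpa using h.2.2 (x - y) (y - z)

lemma nonneg (h : IsNorm φ) (x : Euc n) : 0 ≤ φ x := by
  have := h.map_sub_le x 0 x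
  rw [sub_self, h.map_zero, sub_zero, zero_sub, h.map_neg] at this
  linarith

lemma pos (h : IsNorm φ) {x : Euc n} (hx : x ≠ 0) : 0 < φ x :=
  (h.nonneg x).lt_of_ne fun h0 => hx ((h.1 x).1 h0.symm)

lemma convexOn (h : IsNorm φ) : ConvexOn ℝ univ φ :=
  ⟨convex_univ, fun x _ y _ a b ha hb _ => by
    simpa only [h.map_smul_of_nonneg ha, h.map_smul_of_nonneg hb, smul_eq_mul] using
      h.2.2 (a • x) (b • y)⟩

lemma continuous (h : IsNorm φ) : Continuous φ :=
  continuousOn_univ.1 (h.convexOn.continuousOn isOpen_univ)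

lemma exists_pos_mul_norm_le (h : IsNorm φ) : ∃ c > 0, ∀ z : Euc n, c * ‖z‖ ≤ φ z := by
  obtain ⟨c, hc, hsphere⟩ := (isCompact_sphere (0 : Euc n) 1).exists_forall_le'
    h.continuous.continuousOn fun z hz => h.pos (ne_zero_of_mem_unit_sphere ⟨z, hz⟩)
  refine ⟨c, hc, fun z => ?_⟩
  rcases eq_or_ne z 0 with rfl | hz
  · simp [h.map_zero]
  have hz' : 0 < ‖z‖ := norm_pos_iff.2 hz
  have := hsphere (‖z‖⁻¹ • z) (by simp [norm_smul, hz'.ne'])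
  rw [h.map_smul_of_nonneg (inv_nonneg.2 hz'.le), inv_mul_eq_div, le_div_iff₀ hz'] at this
  linarith

lemma isCompact_setOf_eq_one (h : IsNorm φ) : IsCompact {z : Euc n | φ z = 1} := by
  obtain ⟨c, hc, hle⟩ := h.exists_pos_mul_norm_le
  refine Metric.isCompact_of_isClosed_isBounded (isClosed_eq h.continuous continuous_const)
    (Metric.isBounded_closedBall (x := 0) (r := c⁻¹) |>.subset fun z hz => ?_)
  rw [mem_closedBall_zero_iff, inv_eq_one_div, le_div_iff₀' hc]
  simpa [show φ z = 1 from hz] using hle z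

lemma smul_unitVec (h : IsNorm φ) (z : Euc n) : φ z • unitVec φ z = z := by
  rcases eq_or_ne z 0 with rfl | hz
  · simp [unitVec]
  · exact smul_inv_smul₀ (h.pos hz).ne' z

lemma map_unitVec (h : IsNorm φ) {z : Euc n} (hz : 0 < φ z) : φ (unitVec φ z) = 1 := by
  rw [unitVec, h.map_smul_of_nonneg (inv_nonneg.2 hz.le), inv_mul_cancel₀ hz.ne']

lemma unitVec_smul (h : IsNorm φ) {c : ℝ} (hc : 0 < c) (z : Euc n) :
    unitVec φ (c • z) = unitVec φ z := by
  rw [unitVec, unitVec, h.map_smul_of_nonneg hc.le, smul_smul, mul_inv, mul_right_comm,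
    inv_mul_cancel₀ hc.ne', one_mul]

lemma norm_unitVec_le (h : IsNorm φ) {c : ℝ} (hc : 0 < c) (hle : ∀ z, c * ‖z‖ ≤ φ z)
    (z : Euc n) : ‖unitVec φ z‖ ≤ c⁻¹ := by
  rcases eq_or_ne z 0 with rfl | hz
  · simp [unitVec, hc.le]
  rw [unitVec, norm_smul, norm_inv, Real.norm_of_nonneg (h.nonneg z), inv_mul_le_iff₀ (h.pos hz),
    ← div_eq_mul_inv, le_div_iff₀ hc, mul_comm]
  exact hle z

lemma norm_sub_le (h : IsNorm φ) {c : ℝ} (hc : 0 < c) (hle : ∀ z, c * ‖z‖ ≤ φ z)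
    (z w : Euc n) : ‖z - w‖ ≤ φ w * ‖unitVec φ z - unitVec φ w‖ + |φ z - φ w| * c⁻¹ := by
  have hdecomp : z - w = φ w • (unitVec φ z - unitVec φ w) + (φ z - φ w) • unitVec φ z := by
    conv_lhs => rw [← h.smul_unitVec z, ← h.smul_unitVec w]
    module
  rw [hdecomp]
  refine (norm_add_le _ _).trans (add_le_add ?_ ?_)
  · rw [norm_smul, Real.norm_of_nonneg (h.nonneg w)]
  · rw [norm_smul, Real.norm_eq_abs]
    exact mul_le_mul_of_nonneg_left (h.norm_unitVec_le hc hle z) (abs_nonneg _)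

lemma mul_two_sub_le_of_le (h : IsNorm φ) {p q : Euc n} (hp : 0 < φ p) (hpq : φ p ≤ φ q) :
    φ p * (2 - φ (unitVec φ p + unitVec φ q)) ≤ φ p + φ q - φ (p + q) := by
  have hdecomp : p + q = φ p • (unitVec φ p + unitVec φ q) + (φ q - φ p) • unitVec φ q := by
    conv_lhs => rw [← h.smul_unitVec p, ← h.smul_unitVec q]
    module
  have := h.2.2 (φ p • (unitVec φ p + unitVec φ q)) ((φ q - φ p) • unitVec φ q)
  rw [← hdecomp, h.map_smul_of_nonneg hp.le, h.map_smul_of_nonneg (sub_nonneg.2 hpq),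
    h.map_unitVec (hp.trans_le hpq)] at this
  linarith

lemma distφ_le (h : IsNorm φ) {k : Euc n} (hk : k ∈ K) (x : Euc n) : distφ φ K x ≤ φ (x - k) :=
  csInf_le ⟨0, fun _ ⟨_, _, hr⟩ => hr ▸ h.nonneg _⟩ ⟨k, hk, rfl⟩

lemma distφ_le_add (h : IsNorm φ) (hK : K.Nonempty) (x y : Euc n) :
    distφ φ K x ≤ distφ φ K y + φ (x - y) := by
  obtain ⟨k₀, hk₀⟩ := hK
  have : distφ φ K x - φ (x - y) ≤ distφ φ K y :=
    le_csInf ⟨_, k₀, hk₀, rfl⟩ <| by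
      rintro _ ⟨k, hk, rfl⟩
      linarith [h.distφ_le hk x, h.map_sub_le x y k]
  linarith

lemma map_sub_le_distφ_add (h : IsNorm φ) {y b : Euc n} (hb : b ∈ nearφ φ K y) (x : Euc n) :
    φ (x - b) ≤ distφ φ K x + 2 * φ (x - y) := by
  have := h.distφ_le_add ⟨b, hb.1⟩ y x
  linarith [h.map_sub_le x y b, hb.2, h.map_sub_rev x y]

lemma distφ_add_smul_of_le (h : IsNorm φ) {x a : Euc n} {μ σ : ℝ} (ha : a ∈ nearφ φ K x)
    (hray : distφ φ K (a + μ • (x - a)) = μ * distφ φ K x) (hσ : 0 ≤ σ) (hσμ : σ ≤ μ) :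
    distφ φ K (a + σ • (x - a)) = σ * distφ φ K x := by
  have hup := h.distφ_le ha.1 (a + σ • (x - a))
  have hlo := h.distφ_le_add ⟨a, ha.1⟩ (a + μ • (x - a)) (a + σ • (x - a))
  rw [add_sub_cancel_left, h.map_smul_of_nonneg hσ, ha.2] at hup
  rw [add_sub_add_left_eq_sub, ← sub_smul, h.map_smul_of_nonneg (sub_nonneg.2 hσμ), ha.2,
    hray] at hlo
  linarith

lemma exists_mem_nearφ_of_lt_rhoφ (h : IsNorm φ) {x : Euc n} {μ : ℝ} (hμ : 0 ≤ μ)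
    (hρ : ENNReal.ofReal μ < rhoφ φ K x) :
    ∃ a ∈ nearφ φ K x, distφ φ K (a + μ • (x - a)) = μ * distφ φ K x := by
  obtain ⟨_, ⟨s, a, ha, rfl, hray⟩, hlt⟩ := lt_sSup_iff.1 hρ
  exact ⟨a, ha, h.distφ_add_smul_of_le ha hray hμ
    ((ENNReal.ofReal_lt_ofReal_iff'.1 hlt).1.le)⟩

end IsNorm

namespace StrictlyConvexNorm

variable {n : ℕ} {φ : Euc n → ℝ}

lemma exists_modulus (hφ : StrictlyConvexNorm φ) {ε : ℝ} (hε : 0 < ε) :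
    ∃ η > 0, ∀ u v : Euc n, φ u = 1 → φ v = 1 → ε ≤ ‖u - v‖ → η ≤ 2 - φ (u + v) := by
  set S : Set (Euc n × Euc n) := ({z | φ z = 1} ×ˢ {z | φ z = 1}) ∩ {p | ε ≤ ‖p.1 - p.2‖}
  have hS : IsCompact S :=
    (hφ.1.isCompact_setOf_eq_one.prod hφ.1.isCompact_setOf_eq_one).inter_right
      (isClosed_le continuous_const (continuous_fst.sub continuous_snd).norm)
  have hlt : ∀ p ∈ S, 0 < 2 - φ (p.1 + p.2) := by
    rintro ⟨u, v⟩ ⟨⟨hu, hv⟩, huv⟩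
    change φ u = 1 at hu
    change φ v = 1 at hv
    change ε ≤ ‖u - v‖ at huv
    have hle : φ (u + v) ≤ 2 := by linarith [hφ.1.2.2 u v]
    refine sub_pos.2 (hle.lt_of_ne fun heq => ?_)
    have := hφ.2 u v (by rw [heq, hu, hv]; norm_num)
    rw [hu, hv, one_smul, one_smul] at this
    rw [this, sub_self, norm_zero] at huv
    linarith
  obtain ⟨η, hη, hbound⟩ := hS.exists_forall_le'
    (continuous_const.sub (hφ.1.continuous.comp (continuous_fst.add continuous_snd))).continuousOn
    hlt
  exact ⟨η, hη, fun u v hu hv huv => hbound (u, v) ⟨⟨hu, hv⟩, huv⟩⟩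

lemma exists_norm_unitVec_sub_lt (hφ : StrictlyConvexNorm φ) {ε m : ℝ} (hε : 0 < ε)
    (hm : 0 < m) : ∃ θ > 0, ∀ p q : Euc n, m ≤ φ p → m ≤ φ q →
      φ p + φ q - φ (p + q) < θ → ‖unitVec φ p - unitVec φ q‖ < ε := by
  obtain ⟨η, hη, hmod⟩ := hφ.exists_modulus hε
  refine ⟨m * η, mul_pos hm hη, fun p q hp hq hdefect => ?_⟩
  wlog hpq : φ p ≤ φ q generalizing p q
  · rw [norm_sub_rev]
    exact this q p hq hp (by rwa [add_comm q, add_comm (φ q)]) (le_of_not_ge hpq)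
  by_contra! hfar
  have hpos := hm.trans_le hp
  have h2 := hmod _ _ (hφ.1.map_unitVec hpos) (hφ.1.map_unitVec (hpos.trans_le hpq)) hfar
  have := hφ.1.mul_two_sub_le_of_le hpos hpq
  have := mul_le_mul hp h2 hη.le hpos.le
  linarith

theorem exists_norm_sub_lt (hφ : StrictlyConvexNorm φ) {s t μ ε : ℝ} (hs : 0 < s)
    (hst : s ≤ t) (hμ : 1 < μ) (hε : 0 < ε) :
    ∃ δ > 0, ∀ {K : Set (Euc n)} {x y a b : Euc n}, a ∈ nearφ φ K x →
      distφ φ K (a + μ • (x - a)) = μ * distφ φ K x → s ≤ distφ φ K x → distφ φ K x ≤ t →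
      b ∈ nearφ φ K y → ‖x - y‖ < δ → ‖a - b‖ < ε := by
  obtain ⟨c, hc, hle⟩ := hφ.1.exists_pos_mul_norm_le
  have ht : 0 < t := hs.trans_le hst
  have hμ' : 0 < μ - 1 := sub_pos.2 hμ
  obtain ⟨θ, hθ, hdir⟩ := hφ.exists_norm_unitVec_sub_lt (div_pos hε (mul_pos two_pos ht))
    (lt_min (mul_pos hμ' hs) hs)
  have hφ0 : Tendsto φ (𝓝 0) (𝓝 0) := by
    simpa [hφ.1.map_zero] using hφ.1.continuous.tendsto 0
  obtain ⟨δ, hδ, hsmall⟩ := Metric.eventually_nhds_iff.1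
    ((hφ0.eventually_lt_const (half_pos hθ)).and (hφ0.eventually_lt_const (by positivity :
      0 < c * ε / 4)))
  refine ⟨δ, hδ, fun {K x y a b} ha hray hsx htx hb hxy => ?_⟩
  obtain ⟨hxyθ, hxyε⟩ := hsmall (by rwa [dist_zero_right] : dist (x - y) 0 < δ)
  set d := distφ φ K x
  have hxb : φ (x - b) ≤ d + 2 * φ (x - y) := hφ.1.map_sub_le_distφ_add hb x
  have hdb : d ≤ φ (x - b) := hφ.1.distφ_le hb.1 x
  have hp : φ ((μ - 1) • (x - a)) = (μ - 1) * d := by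
    rw [hφ.1.map_smul_of_nonneg hμ'.le, ha.2]
  have hpq : μ * d ≤ φ ((μ - 1) • (x - a) + (x - b)) := by
    have : (μ - 1) • (x - a) + (x - b) = (a + μ • (x - a)) - b := by module
    rw [this, ← hray]
    exact hφ.1.distφ_le hb.1 _
  have hclose : ‖unitVec φ (x - b) - unitVec φ (x - a)‖ < ε / (2 * t) := by
    rw [norm_sub_rev, ← hφ.1.unitVec_smul hμ' (x - a)]
    refine hdir _ _ ?_ ?_ ?_
    · rw [hp]
      exact (min_le_left _ _).trans (mul_le_mul_of_nonneg_left hsx hμ'.le)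
    · exact (min_le_right _ _).trans (hsx.trans hdb)
    · rw [hp]
      linarith
  calc ‖a - b‖ = ‖(x - b) - (x - a)‖ := by congr 1; abel
    _ ≤ φ (x - a) * ‖unitVec φ (x - b) - unitVec φ (x - a)‖ + |φ (x - b) - φ (x - a)| * c⁻¹ :=
      hφ.1.norm_sub_le hc hle _ _
    _ < t * (ε / (2 * t)) + 2 * (c * ε / 4) * c⁻¹ := by
      rw [ha.2, abs_of_nonneg (sub_nonneg.2 hdb)]
      refine add_lt_add_of_le_of_lt
        (mul_le_mul htx hclose.le (norm_nonneg _) ht.le)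
        (mul_lt_mul_of_pos_right (by linarith) (inv_pos.2 hc))
    _ = ε := by field_simp; ring

end StrictlyConvexNorm

theorem stmt11_general {n : ℕ} (φ : Euc n → ℝ) (hφ : StrictlyConvexNorm φ) (K : Set (Euc n))
    (s t lam : ℝ) (hs : 0 < s) (hst : s < t) (hlam : 1 < lam)
    (Kst : Set (Euc n))
    (hKst : Kst = {x | ENNReal.ofReal lam ≤ rhoφ φ K x ∧ s ≤ distφ φ K x ∧ distφ φ K x ≤ t}) :
    (∀ x ∈ Kst, ∃ a : Euc n, nearφ φ K x = {a}) ∧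
    ∀ ε > (0 : ℝ), ∃ δ > (0 : ℝ), ∀ x ∈ Kst, ∀ y ∈ Kst,
      ∀ a ∈ nearφ φ K x, ∀ b ∈ nearφ φ K y, ‖x - y‖ < δ → ‖a - b‖ < ε := by
  have hmem : ∀ x ∈ Kst,
      ENNReal.ofReal lam ≤ rhoφ φ K x ∧ s ≤ distφ φ K x ∧ distφ φ K x ≤ t := by
    rw [hKst]
    exact fun _ => id
  obtain ⟨μ, hμ, hμlam⟩ := exists_between hlam
  have hray : ∀ x ∈ Kst, ∃ a ∈ nearφ φ K x, distφ φ K (a + μ • (x - a)) = μ * distφ φ K x :=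
    fun x hx => hφ.1.exists_mem_nearφ_of_lt_rhoφ (by linarith) <|
      ((ENNReal.ofReal_lt_ofReal_iff (by linarith)).2 hμlam).trans_le (hmem x hx).1
  -- Both `a` and `b` are compared with the nearest point of `x` that has the ray property;
  -- with `y = x` this also gives uniqueness.
  have hclose : ∀ ε > (0 : ℝ), ∃ δ > (0 : ℝ), ∀ x ∈ Kst, ∀ y,
      ∀ a ∈ nearφ φ K x, ∀ b ∈ nearφ φ K y, ‖x - y‖ < δ → ‖a - b‖ < ε := by
    intro ε hε
    obtain ⟨δ, hδ, h⟩ := hφ.exists_norm_sub_lt hs hst.le hμ (half_pos hε)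
    refine ⟨δ, hδ, fun x hx y a ha b hb hxy => ?_⟩
    obtain ⟨a₀, ha₀, ha₀ray⟩ := hray x hx
    obtain ⟨-, hsx, htx⟩ := hmem x hx
    calc ‖a - b‖ ≤ ‖a₀ - a‖ + ‖a₀ - b‖ := by
          simpa only [dist_eq_norm] using dist_triangle_left a b a₀
      _ < ε / 2 + ε / 2 := add_lt_add
          (h ha₀ ha₀ray hsx htx ha (by simpa using hδ)) (h ha₀ ha₀ray hsx htx hb hxy)
      _ = ε := add_halves ε
  refine ⟨fun x hx => ?_, fun ε hε => ?_⟩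
  · obtain ⟨a, ha, -⟩ := hray x hx
    refine ⟨a, eq_singleton_iff_unique_mem.2 ⟨ha, fun b hb => eq_of_forall_dist_le fun ε hε => ?_⟩⟩
    obtain ⟨δ, hδ, h⟩ := hclose ε hε
    rw [dist_eq_norm]
    exact (h x hx x b hb a ha (by simpa using hδ)).le
  · obtain ⟨δ, hδ, h⟩ := hclose ε hε
    exact ⟨δ, hδ, fun x hx y _ => h x hx y⟩

theorem stmt11 {n : ℕ} (φ : Euc n → ℝ) (hφ : StrictlyConvexNorm φ) (K : Set (Euc n))
    (hK : IsClosed K) (s t lam : ℝ) (hs : 0 < s) (hst : s < t) (hlam : 1 < lam)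
    (Kst : Set (Euc n))
    (hKst : Kst = {x | ENNReal.ofReal lam ≤ rhoφ φ K x ∧ s ≤ distφ φ K x ∧ distφ φ K x ≤ t}) :
    (∀ x ∈ Kst, ∃ a : Euc n, nearφ φ K x = {a}) ∧
    ∀ ε > (0 : ℝ), ∃ δ > (0 : ℝ), ∀ x ∈ Kst, ∀ y ∈ Kst,
      ∀ a ∈ nearφ φ K x, ∀ b ∈ nearφ φ K y, ‖x - y‖ < δ → ‖a - b‖ < ε :=
  stmt11_general φ hφ K s t lam hs hst hlam Kst hKst
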